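/- If r and s are both odd, then {Θ^{1,p}_{r−1,ε}, Θ^{1,p}_{s,ε}}_f + {Θ^{1,p}_{r,ε}, Θ^{1,p}_{s−1,ε}}_f = Θ^{1,p}_{r−1,ε} Θ^{1,p}_{s,ε} − Θ^{1,p}_{s−1,ε} Θ^{1,p}_{r,ε}; if r and s are both even, the left-hand side vanishes. -/

import Mathlib

/-!
Write `D_i = x_i ∂/∂x_i`; the bracket `{g, h}_f` is the form `∑_{i<j} (u_i v_j - u_j v_i)`
evaluated on the vectors `D g` and `D h`. Splitting off the last variable `y`,
`Θ_r = Θ'_r + y^{±1} Θ'_{r-1}`, turns `{Θ_a, Θ_b}_f` into a combination of the four brackets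
`{Θ'_{a or a-1}, Θ'_{b or b-1}}` plus boundary terms, which are controlled by Euler's identity
`∑_i D_i Θ_r = deg(r) Θ_r`. The alternating convolutions `G(c, d) = ∑_{m ≥ 0} (-1)^m Θ_{c-m} Θ_{d+m}`
obey the same recursion when placed as `{Θ_a, Θ_b}_f = -G(a, b)` for `a` odd, `b` even (and `0`
for equal parities), so by induction on `p` this closed form holds. Both claims are then identities
between alternating convolutions, which follow from `G(c, d) + G(c-1, d+1) = Θ_c Θ_d` and the
symmetry `G(c, d) = G(d-1, c+1)` for odd `c + d`.
-/

/-- `Θ^{1,p}_{r,ε}[x] = Σ_{1 ≤ i₁ < … < i_r ≤ p} Π_j x_{i_j}^{(-1)^{j+ε}}`, equal to `1` for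
`r = 0` and to `0` for `r < 0` or `r > p` (the latter automatically). `ε` acts mod 2. -/
noncomputable def Theta (p : ℕ) (ε : ℕ) (r : ℤ) (x : Fin p → ℝ) : ℝ :=
  if 0 ≤ r then
    ∑ s ∈ (Finset.univ : Finset (Fin p)).powersetCard r.toNat,
      (((s.sort (· ≤ ·)).zipIdx.map Prod.swap).map (fun ji => x ji.2 ^ ((-1 : ℤ) ^ (ji.1 + 1 + ε)))).prod
  else 0

/-- The sine-Gordon Poisson bracket
`{g,h}_f = Σ_{i<j} f_i f_j (∂g/∂f_i ∂h/∂f_j − ∂g/∂f_j ∂h/∂f_i)`. -/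
noncomputable def pbSG (p : ℕ) (g h : (Fin p → ℝ) → ℝ) (x : Fin p → ℝ) : ℝ :=
  ∑ i : Fin p, ∑ j : Fin p,
    if i < j then
      x i * x j *
        (fderiv ℝ g x (Pi.single i 1) * fderiv ℝ h x (Pi.single j 1) -
          fderiv ℝ g x (Pi.single j 1) * fderiv ℝ h x (Pi.single i 1))
    else 0

open Finset

lemma Finset.sort_insert_last_map_castSuccEmb {p : ℕ} (s : Finset (Fin p)) :
    (insert (Fin.last p) (s.map Fin.castSuccEmb)).sort (· ≤ ·)
      = (s.map Fin.castSuccEmb).sort (· ≤ ·) ++ [Fin.last p] := by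
  have hnodup : ((s.map Fin.castSuccEmb).sort (· ≤ ·) ++ [Fin.last p]).Nodup := by
    simp [List.nodup_append, sort_nodup, Fin.castSucc_ne_last]
  rw [← (List.toFinset_sort (· ≤ ·) hnodup).2]
  · congr 1
    ext i
    simp
  · simp [List.pairwise_append, pairwise_sort, Fin.le_last]

lemma Finset.sum_powersetCard_succ_insert {α M : Type*} [DecidableEq α] [AddCommMonoid M]
    {a : α} {s : Finset α} (ha : a ∉ s) (k : ℕ) (f : Finset α → M) :
    ∑ t ∈ powersetCard (k + 1) (insert a s), f t
      = ∑ t ∈ powersetCard (k + 1) s, f t + ∑ t ∈ powersetCard k s, f (insert a t) := by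
  have hnot : ∀ t ∈ powersetCard k s, a ∉ t := fun t ht h => ha ((mem_powersetCard.1 ht).1 h)
  rw [powersetCard_succ_insert ha, sum_union, sum_image]
  · intro t ht u hu htu
    rw [← erase_insert (hnot t ht), htu, erase_insert (hnot u hu)]
  · refine disjoint_left.2 fun t ht ht' => ?_
    obtain ⟨u, -, rfl⟩ := mem_image.1 ht'
    exact ha ((mem_powersetCard.1 ht).1 (mem_insert_self a u))

section Wedge

variable {R ι : Type*} [CommRing R] [Fintype ι] [LinearOrder ι]

def wedge : (ι → R) →ₗ[R] (ι → R) →ₗ[R] R :=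
  LinearMap.mk₂ R (fun u v => ∑ i, ∑ j, if i < j then u i * v j - u j * v i else 0)
    (fun u u' v => by simp only [Pi.add_apply, ← sum_add_distrib]; congr! 2; split_ifs <;> ring)
    (fun c u v => by simp only [Pi.smul_apply, smul_eq_mul, mul_sum]; congr! 2; split_ifs <;> ring)
    (fun u v v' => by simp only [Pi.add_apply, ← sum_add_distrib]; congr! 2; split_ifs <;> ring)
    (fun c u v => by simp only [Pi.smul_apply, smul_eq_mul, mul_sum]; congr! 2; split_ifs <;> ring)

lemma wedge_apply (u v : ι → R) :
    wedge u v = ∑ i, ∑ j, if i < j then u i * v j - u j * v i else 0 := rfl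

end Wedge

lemma wedge_snoc {R : Type*} [CommRing R] {n : ℕ} (u v : Fin n → R) (a b : R) :
    wedge (Fin.snoc (α := fun _ => R) u a) (Fin.snoc (α := fun _ => R) v b)
      = wedge u v + (∑ i, u i) * b - a * ∑ i, v i := by
  simp only [wedge_apply, Fin.sum_univ_castSucc, Fin.snoc_castSucc, Fin.snoc_last,
    sum_add_distrib, Fin.castSucc_lt_castSucc_iff, not_lt_of_ge (Fin.le_last _), ↓reduceIte,
    sum_const_zero, add_zero, Fin.castSucc_lt_last, sum_sub_distrib, sum_mul,
    mul_sum]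
  ring

/-- The exponent `(-1) ^ (r + ε)` carried by the `r`-th factor of a monomial of `Theta`. -/
def thetaExp (ε : ℕ) (r : ℤ) : ℤ := if Even (r + ε) then 1 else -1

noncomputable def thetaTerm {p : ℕ} (ε : ℕ) (x : Fin p → ℝ) (s : Finset (Fin p)) : ℝ :=
  (((s.sort (· ≤ ·)).zipIdx.map Prod.swap).map
    (fun ji => x ji.2 ^ ((-1 : ℤ) ^ (ji.1 + 1 + ε)))).prod

lemma theta_eq_sum {p ε : ℕ} {r : ℤ} (hr : 0 ≤ r) (x : Fin p → ℝ) :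
    Theta p ε r x = ∑ s ∈ univ.powersetCard r.toNat, thetaTerm ε x s := by
  rw [Theta, if_pos hr]; rfl

lemma theta_of_neg {p ε : ℕ} {r : ℤ} (hr : r < 0) (x : Fin p → ℝ) : Theta p ε r x = 0 :=
  if_neg hr.not_ge

lemma theta_zero (p ε : ℕ) (x : Fin p → ℝ) : Theta p ε 0 x = 1 := by
  simp [theta_eq_sum le_rfl, thetaTerm]

lemma theta_fin_zero {ε : ℕ} {r : ℤ} (hr : r ≠ 0) (x : Fin 0 → ℝ) :
    Theta 0 ε r x = 0 := by
  rcases hr.lt_or_gt with hr | hr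
  · exact theta_of_neg hr x
  · rw [theta_eq_sum hr.le, powersetCard_eq_empty.2 (by rw [card_univ, Fintype.card_fin]; omega),
      sum_empty]

lemma thetaTerm_map_castSucc {p ε : ℕ} (x : Fin (p + 1) → ℝ) (s : Finset (Fin p)) :
    thetaTerm ε x (s.map Fin.castSuccEmb) = thetaTerm ε (Fin.init x) s := by
  simp only [thetaTerm, ← StrictMonoOn.map_finsetSort Fin.castSuccEmb s
    (Fin.strictMono_castSucc.strictMonoOn _), List.zipIdx_map, List.map_map]
  rfl

lemma thetaTerm_insert_last {p ε : ℕ} (x : Fin (p + 1) → ℝ) (s : Finset (Fin p)) :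
    thetaTerm ε x (insert (Fin.last p) (s.map Fin.castSuccEmb))
      = thetaTerm ε (Fin.init x) s * x (Fin.last p) ^ ((-1 : ℤ) ^ (s.card + 1 + ε)) := by
  rw [← thetaTerm_map_castSucc, thetaTerm, Finset.sort_insert_last_map_castSuccEmb,
    List.zipIdx_append]
  simp [thetaTerm]

lemma theta_succ (p ε : ℕ) (r : ℤ) (x : Fin (p + 1) → ℝ) :
    Theta (p + 1) ε r x
      = Theta p ε r (Fin.init x)
        + x (Fin.last p) ^ thetaExp ε r * Theta p ε (r - 1) (Fin.init x) := by
  rcases lt_trichotomy r 0 with hr | rfl | hr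
  · simp [theta_of_neg hr, theta_of_neg (show r - 1 < 0 by omega)]
  · rw [theta_zero, theta_zero, theta_of_neg (by norm_num), mul_zero, add_zero]
  obtain ⟨k, rfl⟩ : ∃ k : ℕ, r = k + 1 := ⟨r.toNat - 1, by omega⟩
  have hlast : Fin.last p ∉ univ.map Fin.castSuccEmb := by simp [Fin.castSucc_ne_last]
  rw [theta_eq_sum (by omega), theta_eq_sum (by omega), theta_eq_sum (by omega),
    Fin.univ_castSuccEmb, cons_eq_insert, show ((k : ℤ) + 1).toNat = k + 1 by omega,
    show ((k : ℤ) + 1 - 1).toNat = k by omega, sum_powersetCard_succ_insert hlast,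
    powersetCard_map, powersetCard_map, sum_map, sum_map, mul_sum]
  congr 1
  · exact sum_congr rfl fun s _ => thetaTerm_map_castSucc x s
  · refine sum_congr rfl fun s hs => ?_
    rw [RelEmbedding.coe_toEmbedding, mapEmbedding_apply, thetaTerm_insert_last,
      (mem_powersetCard.1 hs).2, mul_comm]
    congr 2
    simp only [thetaExp, neg_one_pow_eq_ite]
    norm_cast

lemma thetaExp_congr (ε : ℕ) {a b : ℤ} (h : Even (a - b)) : thetaExp ε a = thetaExp ε b := by
  unfold thetaExp; split_ifs <;> grind

lemma thetaExp_add_eq_zero (ε : ℕ) {a b : ℤ} (h : Odd (a + b)) :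
    thetaExp ε a + thetaExp ε b = 0 := by
  unfold thetaExp; split_ifs <;> grind

lemma thetaExp_mul_of_even (ε : ℕ) {a b : ℤ} (h : Even (a - b)) :
    (thetaExp ε a : ℝ) * thetaExp ε b = 1 := by
  rw [thetaExp_congr ε h]; unfold thetaExp; split_ifs <;> norm_num

lemma thetaExp_mul_of_odd (ε : ℕ) {a b : ℤ} (h : Odd (a + b)) :
    (thetaExp ε a : ℝ) * thetaExp ε b = -1 := by
  rw [eq_neg_of_add_eq_zero_right (thetaExp_add_eq_zero ε h)]
  unfold thetaExp; split_ifs <;> norm_num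

lemma zpow_thetaExp_mul_zpow_thetaExp {ε : ℕ} {a b : ℤ} (h : Odd (a + b)) {y : ℝ}
    (hy : y ≠ 0) :
    y ^ thetaExp ε a * y ^ thetaExp ε b = 1 := by
  rw [← zpow_add₀ hy, thetaExp_add_eq_zero ε h, zpow_zero]

/-- The common degree of the monomials of `Theta p ε r`. -/
def thetaDegree (ε : ℕ) (r : ℤ) : ℤ := if Even r then 0 else thetaExp ε r

lemma thetaDegree_sub_one_add_thetaExp (ε : ℕ) (r : ℤ) :
    thetaDegree ε (r - 1) + thetaExp ε r = thetaDegree ε r := by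
  unfold thetaDegree thetaExp; split_ifs <;> grind

lemma thetaDegree_of_even (ε : ℕ) {r : ℤ} (h : Even r) : thetaDegree ε r = 0 := if_pos h

lemma thetaDegree_of_odd (ε : ℕ) {r : ℤ} (h : Odd r) : thetaDegree ε r = thetaExp ε r :=
  if_neg (Int.not_even_iff_odd.2 h)

/-- `thetaLogGrad p ε r x i = x i * ∂(Theta p ε r)/∂x i`, computed by peeling off the
last variable as in `theta_succ`. -/
noncomputable def thetaLogGrad : (p : ℕ) → ℕ → ℤ → (Fin p → ℝ) → Fin p → ℝ
  | 0, _, _, _ => 0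
  | p + 1, ε, r, x =>
    Fin.snoc (α := fun _ => ℝ)
      (thetaLogGrad p ε r (Fin.init x)
        + x (Fin.last p) ^ thetaExp ε r • thetaLogGrad p ε (r - 1) (Fin.init x))
      (thetaExp ε r * x (Fin.last p) ^ thetaExp ε r * Theta p ε (r - 1) (Fin.init x))

lemma thetaLogGrad_castSucc (p ε : ℕ) (r : ℤ) (x : Fin (p + 1) → ℝ) (i : Fin p) :
    thetaLogGrad (p + 1) ε r x i.castSucc
      = thetaLogGrad p ε r (Fin.init x) i
        + x (Fin.last p) ^ thetaExp ε r * thetaLogGrad p ε (r - 1) (Fin.init x) i := by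
  simp [thetaLogGrad]

lemma thetaLogGrad_last (p ε : ℕ) (r : ℤ) (x : Fin (p + 1) → ℝ) :
    thetaLogGrad (p + 1) ε r x (Fin.last p)
      = thetaExp ε r * x (Fin.last p) ^ thetaExp ε r * Theta p ε (r - 1) (Fin.init x) := by
  simp [thetaLogGrad]

lemma sum_thetaLogGrad (p ε : ℕ) (r : ℤ) (x : Fin p → ℝ) :
    ∑ i, thetaLogGrad p ε r x i = thetaDegree ε r * Theta p ε r x := by
  induction p generalizing r with
  | zero =>
    rcases eq_or_ne r 0 with rfl | hr
    · simp [thetaDegree]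
    · simp [theta_fin_zero hr]
  | succ p ih =>
    rw [Fin.sum_univ_castSucc]
    simp only [thetaLogGrad_castSucc, thetaLogGrad_last, sum_add_distrib, ← mul_sum, ih,
      theta_succ p ε r x, ← thetaDegree_sub_one_add_thetaExp ε r]
    push_cast
    ring

lemma differentiableAt_theta (p ε : ℕ) (r : ℤ) {x : Fin p → ℝ} (hx : ∀ i, x i ≠ 0) :
    DifferentiableAt ℝ (Theta p ε r) x := by
  induction p generalizing r with
  | zero =>
    rw [show Theta 0 ε r = fun _ => Theta 0 ε r x from
      funext fun z => by rw [Subsingleton.elim z x]]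
    exact differentiableAt_const _
  | succ p ih =>
    have hinit : DifferentiableAt ℝ (fun z : Fin (p + 1) → ℝ => Fin.init z) x := by
      unfold Fin.init; fun_prop
    have h₁ := ih r (x := Fin.init x) fun i => hx _
    have h₂ := ih (r - 1) (x := Fin.init x) fun i => hx _
    rw [show Theta (p + 1) ε r = fun z => Theta p ε r (Fin.init z)
        + z (Fin.last p) ^ thetaExp ε r * Theta p ε (r - 1) (Fin.init z) from
      funext (theta_succ p ε r)]
    fun_prop (disch := exact Or.inl (hx _))

lemma hasDerivAt_theta_update (p ε : ℕ) (r : ℤ) {x : Fin p → ℝ} {i : Fin p}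
    (hi : x i ≠ 0) :
    HasDerivAt (fun t => Theta p ε r (Function.update x i t))
      (thetaLogGrad p ε r x i / x i) (x i) := by
  induction p generalizing r with
  | zero => exact i.elim0
  | succ p ih =>
    induction i using Fin.lastCases with
    | last =>
      simp only [theta_succ, Fin.init_update_last, Function.update_self, thetaLogGrad_last]
      refine (((hasDerivAt_zpow (thetaExp ε r) _ (Or.inl hi)).mul_const
        (Theta p ε (r - 1) (Fin.init x))).const_add (Theta p ε r (Fin.init x))).congr_deriv ?_
      rw [zpow_sub_one₀ hi]
      ring
    | cast j =>
      simp only [theta_succ, Fin.init_update_castSucc,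
        Function.update_of_ne (Fin.castSucc_lt_last j).ne', thetaLogGrad_castSucc]
      refine ((ih r (x := Fin.init x) hi).add ((ih (r - 1) (x := Fin.init x) hi).const_mul
        (x (Fin.last p) ^ thetaExp ε r))).congr_deriv ?_
      simp only [Fin.init]
      ring

lemma mul_fderiv_theta (p ε : ℕ) (r : ℤ) {x : Fin p → ℝ} (hx : ∀ i, x i ≠ 0)
    (i : Fin p) :
    x i * fderiv ℝ (Theta p ε r) x (Pi.single i 1) = thetaLogGrad p ε r x i := by
  have hf := (differentiableAt_theta p ε r hx).hasFDerivAt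
  rw [← Function.update_eq_self i x] at hf
  have hline := hf.comp_hasDerivAt (x i) (hasDerivAt_update x i (x i))
  rw [Function.update_eq_self] at hline
  rw [hline.unique (hasDerivAt_theta_update p ε r (hx i)), mul_div_cancel₀ _ (hx i)]

noncomputable def thetaBracket (p ε : ℕ) (a b : ℤ) (x : Fin p → ℝ) : ℝ :=
  wedge (thetaLogGrad p ε a x) (thetaLogGrad p ε b x)

lemma pbSG_theta (p ε : ℕ) (a b : ℤ) {x : Fin p → ℝ} (hx : ∀ i, x i ≠ 0) :
    pbSG p (Theta p ε a) (Theta p ε b) x = thetaBracket p ε a b x := by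
  refine sum_congr rfl fun i _ => sum_congr rfl fun j _ => ?_
  split_ifs
  · rw [← mul_fderiv_theta p ε a hx, ← mul_fderiv_theta p ε a hx,
      ← mul_fderiv_theta p ε b hx, ← mul_fderiv_theta p ε b hx]
    ring
  · rfl

/-- The common recursion in `p` satisfied by `thetaBracket` and by its closed form: `B` stands for
the bracket in the first `p` variables, `x (Fin.last p)` is the new variable. -/
noncomputable def thetaBracketStep (p ε : ℕ) (B : ℤ → ℤ → ℝ) (x : Fin (p + 1) → ℝ)
    (a b : ℤ) : ℝ :=
  let Y r := x (Fin.last p) ^ thetaExp ε r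
  let θ r := Theta p ε r (Fin.init x)
  let S r := thetaDegree ε r * θ r + Y r * (thetaDegree ε (r - 1) * θ (r - 1))
  let ℓ r := thetaExp ε r * Y r * θ (r - 1)
  B a b + Y b * B a (b - 1) + Y a * B (a - 1) b + Y a * Y b * B (a - 1) (b - 1)
    + S a * ℓ b - ℓ a * S b

lemma thetaBracket_succ (p ε : ℕ) (a b : ℤ) (x : Fin (p + 1) → ℝ) :
    thetaBracket (p + 1) ε a b x
      = thetaBracketStep p ε (fun a b => thetaBracket p ε a b (Fin.init x)) x a b := by
  simp only [thetaBracket, thetaLogGrad, wedge_snoc, map_add, map_smul, LinearMap.add_apply,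
    LinearMap.smul_apply, smul_eq_mul, Pi.add_apply, Pi.smul_apply, sum_add_distrib, ← mul_sum,
    sum_thetaLogGrad, thetaBracketStep]
  ring

/-- `∑_{m ≥ 0} (-1) ^ m Θ_{c-m} Θ_{d+m}`; the terms with `m > c` vanish. -/
noncomputable def thetaConv (p ε : ℕ) (c d : ℤ) (x : Fin p → ℝ) : ℝ :=
  ∑ m ∈ range (c + 1).toNat, (-1) ^ m * Theta p ε (c - m) x * Theta p ε (d + m) x

section ThetaConv

variable {p ε : ℕ} {x : Fin p → ℝ}

lemma thetaConv_of_neg {c : ℤ} (hc : c < 0) (d : ℤ) : thetaConv p ε c d x = 0 := by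
  simp [thetaConv, Int.toNat_eq_zero.2 (show c + 1 ≤ 0 by omega)]

lemma thetaConv_eq_sub (c d : ℤ) :
    thetaConv p ε c d x = Theta p ε c x * Theta p ε d x - thetaConv p ε (c - 1) (d + 1) x := by
  rcases lt_or_ge c 0 with hc | hc
  · simp [thetaConv_of_neg hc, thetaConv_of_neg (show c - 1 < 0 by omega), theta_of_neg hc]
  obtain ⟨k, rfl⟩ : ∃ k : ℕ, c = k := ⟨c.toNat, by omega⟩
  have hterm : ∀ m ∈ range k, (-1 : ℝ) ^ (m + 1) * Theta p ε (k - (m + 1 : ℕ)) x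
      * Theta p ε (d + (m + 1 : ℕ)) x
      = -((-1) ^ m * Theta p ε (k - 1 - m) x * Theta p ε (d + 1 + m) x) := fun m _ => by
    rw [show (k : ℤ) - (m + 1 : ℕ) = k - 1 - m by push_cast; ring,
      show d + (m + 1 : ℕ) = d + 1 + m by push_cast; ring, pow_succ]
    ring
  rw [thetaConv, thetaConv, show ((k : ℤ) + 1).toNat = k + 1 by omega,
    show ((k : ℤ) - 1 + 1).toNat = k by omega, sum_range_succ', sum_congr rfl hterm,
    sum_neg_distrib]
  simp only [pow_zero, CharP.cast_eq_zero, sub_zero, one_mul, add_zero]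
  ring

lemma thetaConv_zero_right {n : ℤ} (hn : Odd n) : thetaConv p ε n 0 x = 0 := by
  rcases lt_or_ge n 0 with hn' | hn'
  · exact thetaConv_of_neg hn' 0
  obtain ⟨N, rfl⟩ : ∃ N : ℕ, n = N := ⟨n.toNat, by omega⟩
  have hN : Odd N := by exact_mod_cast hn
  set f : ℕ → ℝ := fun m => (-1) ^ m * Theta p ε (N - m) x * Theta p ε (0 + m) x
  have hreflect : ∑ m ∈ range (N + 1), f (N - m) = -∑ m ∈ range (N + 1), f m := by
    rw [← sum_neg_distrib]
    refine sum_congr rfl fun m hm => ?_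
    have hmN : m ≤ N := Nat.lt_succ_iff.1 (mem_range.1 hm)
    have hsign : ((-1 : ℝ) ^ m) * (-1) ^ (N - m) = -1 := by
      rw [pow_mul_pow_sub _ hmN, hN.neg_one_pow]
    have hsq : ((-1 : ℝ) ^ m) * (-1) ^ m = 1 := by rw [← mul_pow]; norm_num
    simp only [f, Nat.cast_sub hmN, sub_sub_cancel, zero_add]
    linear_combination ((-1 : ℝ) ^ m * Theta p ε m x * Theta p ε (N - m) x) * hsign
      - ((-1 : ℝ) ^ (N - m) * Theta p ε m x * Theta p ε (N - m) x) * hsq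
  have hsum := sum_range_reflect f (N + 1)
  rw [Nat.add_sub_cancel, hreflect] at hsum
  rw [thetaConv, show ((N : ℤ) + 1).toNat = N + 1 by omega]
  linarith

/-- For odd `c + d` the alternating sum is symmetric under `(c, d) ↦ (d - 1, c + 1)`: both sides
satisfy the recursion `thetaConv_eq_sub`, and they agree at `c = -1` by `thetaConv_zero_right`. -/
lemma thetaConv_shift {c d : ℤ} (h : Odd (c + d)) :
    thetaConv p ε c d x = thetaConv p ε (d - 1) (c + 1) x := by
  obtain ⟨n, rfl⟩ : ∃ n, d = n - c := ⟨c + d, by ring⟩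
  rw [add_sub_cancel] at h
  induction c using Int.inductionOn' with
  | b => exact -1
  | zero =>
    rw [thetaConv_of_neg (by norm_num), show n - -1 - 1 = n by ring, neg_add_cancel,
      thetaConv_zero_right h]
  | succ k _ ih =>
    have h1 := thetaConv_eq_sub (p := p) (ε := ε) (x := x) (k + 1) (n - (k + 1))
    have h2 := thetaConv_eq_sub (p := p) (ε := ε) (x := x) (n - (k + 1)) (k + 1)
    ring_nf at h1 h2 ih ⊢
    linear_combination h1 - h2 - ih
  | pred k _ ih =>
    have h1 := thetaConv_eq_sub (p := p) (ε := ε) (x := x) k (n - k)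
    have h2 := thetaConv_eq_sub (p := p) (ε := ε) (x := x) (n - k) k
    ring_nf at h1 h2 ih ⊢
    linear_combination h1 - h2 - ih

lemma thetaConv_add_swap {c d : ℤ} (h : Odd (c + d)) :
    thetaConv p ε c d x + thetaConv p ε d c x = Theta p ε c x * Theta p ε d x := by
  rw [thetaConv_eq_sub d c, ← thetaConv_shift h]
  ring

lemma thetaConv_sub_thetaConv {a b : ℤ} (h : Even (a + b)) :
    thetaConv p ε b (a - 1) x - thetaConv p ε a (b - 1) x
      = Theta p ε (a - 1) x * Theta p ε b x - Theta p ε a x * Theta p ε (b - 1) x := by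
  rw [thetaConv_eq_sub b (a - 1), sub_add_cancel]
  linear_combination
    -thetaConv_add_swap (p := p) (ε := ε) (x := x) (c := a) (d := b - 1) (by grind)

end ThetaConv

lemma thetaConv_succ {p ε : ℕ} {c d : ℤ} (h : Odd (c + d)) {x : Fin (p + 1) → ℝ}
    (hy : x (Fin.last p) ≠ 0) :
    thetaConv (p + 1) ε c d x
      = thetaConv p ε c d (Fin.init x) + thetaConv p ε (c - 1) (d - 1) (Fin.init x)
        + x (Fin.last p) ^ thetaExp ε d * Theta p ε c (Fin.init x)
          * Theta p ε (d - 1) (Fin.init x) := by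
  induction c using Int.inductionOn' generalizing d with
  | b => exact -1
  | zero => simp [thetaConv_of_neg, theta_of_neg]
  | pred k hk _ =>
    simp [thetaConv_of_neg (show k - 1 < 0 by omega),
      thetaConv_of_neg (show k - 1 - 1 < 0 by omega), theta_of_neg (show k - 1 < 0 by omega)]
  | succ k _ ih =>
    have ih' := ih (d := d + 1) (by grind)
    rw [thetaExp_congr ε (show Even (d + 1 - (k + 1)) by grind)] at ih'
    have h1 := thetaConv_eq_sub (p := p + 1) (ε := ε) (x := x) (k + 1) d
    have h2 := thetaConv_eq_sub (p := p) (ε := ε) (x := Fin.init x) (k + 1) d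
    have h3 := thetaConv_eq_sub (p := p) (ε := ε) (x := Fin.init x) k (d - 1)
    have t1 := theta_succ p ε (k + 1) x
    have t2 := theta_succ p ε d x
    have hY := zpow_thetaExp_mul_zpow_thetaExp (ε := ε) h hy
    simp only [add_sub_cancel_right, sub_add_cancel] at h1 ih' h2 h3 t1 ⊢
    linear_combination h1 - ih' - h2 - h3 + Theta (p + 1) ε d x * t1
      + (Theta p ε (k + 1) (Fin.init x)
        + x (Fin.last p) ^ thetaExp ε (k + 1) * Theta p ε k (Fin.init x)) * t2
      + Theta p ε k (Fin.init x) * Theta p ε (d - 1) (Fin.init x) * hY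

lemma thetaConv_fin_zero {ε : ℕ} {c d : ℤ} (h : Odd (c + d)) (x : Fin 0 → ℝ) :
    thetaConv 0 ε c d x = 0 := by
  refine sum_eq_zero fun m _ => ?_
  by_cases hm : c - m = 0
  · rw [theta_fin_zero (show d + m ≠ 0 by grind), mul_zero]
  · rw [theta_fin_zero hm, mul_zero, zero_mul]

noncomputable def thetaBracketClosed (p ε : ℕ) (a b : ℤ) (x : Fin p → ℝ) : ℝ :=
  if Odd a ∧ Even b then -thetaConv p ε a b x
  else if Even a ∧ Odd b then thetaConv p ε b a x else 0

section ThetaBracketClosed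

variable {p ε : ℕ} {a b : ℤ}

lemma thetaBracketClosed_of_odd_of_even (ha : Odd a) (hb : Even b) (x : Fin p → ℝ) :
    thetaBracketClosed p ε a b x = -thetaConv p ε a b x := by
  simp [thetaBracketClosed, ha, hb]

lemma thetaBracketClosed_of_even_of_odd (ha : Even a) (hb : Odd b) (x : Fin p → ℝ) :
    thetaBracketClosed p ε a b x = thetaConv p ε b a x := by
  simp [thetaBracketClosed, ha, hb, Int.not_odd_iff_even.2 ha]

lemma thetaBracketClosed_of_odd_of_odd (ha : Odd a) (hb : Odd b) (x : Fin p → ℝ) :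
    thetaBracketClosed p ε a b x = 0 := by
  simp [thetaBracketClosed, Int.not_even_iff_odd.2 ha, Int.not_even_iff_odd.2 hb]

lemma thetaBracketClosed_of_even_of_even (ha : Even a) (hb : Even b) (x : Fin p → ℝ) :
    thetaBracketClosed p ε a b x = 0 := by
  simp [thetaBracketClosed, Int.not_odd_iff_even.2 ha, Int.not_odd_iff_even.2 hb]

variable {x : Fin (p + 1) → ℝ}

lemma thetaBracketClosed_succ_of_odd_of_even (ha : Odd a) (hb : Even b)
    (hy : x (Fin.last p) ≠ 0) :
    thetaBracketClosed (p + 1) ε a b x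
      = thetaBracketStep p ε (fun a b => thetaBracketClosed p ε a b (Fin.init x)) x a b := by
  simp only [thetaBracketStep, thetaBracketClosed_of_odd_of_even ha hb,
    thetaBracketClosed_of_odd_of_odd ha (hb.sub_odd odd_one),
    thetaBracketClosed_of_even_of_even (ha.sub_odd odd_one) hb,
    thetaBracketClosed_of_even_of_odd (ha.sub_odd odd_one) (hb.sub_odd odd_one),
    thetaDegree_of_odd ε ha, thetaDegree_of_even ε hb,
    thetaDegree_of_even ε (ha.sub_odd odd_one), thetaDegree_of_odd ε (hb.sub_odd odd_one),
    thetaConv_succ (ha.add_even hb) hy]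
  linear_combination
    -thetaConv_add_swap (p := p) (ε := ε) (x := Fin.init x) (c := a - 1) (d := b - 1) (by grind)
    + (Theta p ε (a - 1) (Fin.init x) * Theta p ε (b - 1) (Fin.init x)
      - thetaConv p ε (b - 1) (a - 1) (Fin.init x))
      * zpow_thetaExp_mul_zpow_thetaExp (ε := ε) (ha.add_even hb) hy
    - x (Fin.last p) ^ thetaExp ε b * Theta p ε a (Fin.init x) * Theta p ε (b - 1) (Fin.init x)
      * thetaExp_mul_of_odd ε (ha.add_even hb)
    + x (Fin.last p) ^ thetaExp ε a * x (Fin.last p) ^ thetaExp ε b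
      * Theta p ε (a - 1) (Fin.init x) * Theta p ε (b - 1) (Fin.init x)
      * thetaExp_mul_of_even ε (show Even (a - (b - 1)) by grind)

lemma thetaBracketClosed_succ_of_odd_of_odd (ha : Odd a) (hb : Odd b) :
    thetaBracketClosed (p + 1) ε a b x
      = thetaBracketStep p ε (fun a b => thetaBracketClosed p ε a b (Fin.init x)) x a b := by
  simp only [thetaBracketStep, thetaBracketClosed_of_odd_of_odd ha hb,
    thetaBracketClosed_of_odd_of_even ha (hb.sub_odd odd_one),
    thetaBracketClosed_of_even_of_odd (ha.sub_odd odd_one) hb,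
    thetaBracketClosed_of_even_of_even (ha.sub_odd odd_one) (hb.sub_odd odd_one),
    thetaDegree_of_odd ε ha, thetaDegree_of_odd ε hb, thetaDegree_of_even ε (ha.sub_odd odd_one),
    thetaDegree_of_even ε (hb.sub_odd odd_one), thetaExp_congr ε (ha.sub_odd hb)]
  linear_combination
    -x (Fin.last p) ^ thetaExp ε b
      * thetaConv_sub_thetaConv (p := p) (ε := ε) (x := Fin.init x) (ha.add_odd hb)
    + x (Fin.last p) ^ thetaExp ε b * (Theta p ε (a - 1) (Fin.init x) * Theta p ε b (Fin.init x)
      - Theta p ε a (Fin.init x) * Theta p ε (b - 1) (Fin.init x))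
      * thetaExp_mul_of_even ε (a := b) (b := b) (by simp)

lemma thetaBracketClosed_succ_of_even_of_even (ha : Even a) (hb : Even b) :
    thetaBracketClosed (p + 1) ε a b x
      = thetaBracketStep p ε (fun a b => thetaBracketClosed p ε a b (Fin.init x)) x a b := by
  simp only [thetaBracketStep, thetaBracketClosed_of_even_of_even ha hb,
    thetaBracketClosed_of_even_of_odd ha (hb.sub_odd odd_one),
    thetaBracketClosed_of_odd_of_even (ha.sub_odd odd_one) hb,
    thetaBracketClosed_of_odd_of_odd (ha.sub_odd odd_one) (hb.sub_odd odd_one),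
    thetaDegree_of_even ε ha, thetaDegree_of_even ε hb,
    thetaDegree_of_odd ε (ha.sub_odd odd_one), thetaDegree_of_odd ε (hb.sub_odd odd_one),
    thetaExp_congr ε (ha.sub hb),
    thetaExp_congr ε (show Even (a - 1 - (b - 1)) by grind)]
  have hshift := thetaConv_shift (p := p) (ε := ε) (x := Fin.init x) (c := a - 1) (d := b)
    (by grind)
  rw [sub_add_cancel] at hshift
  linear_combination x (Fin.last p) ^ thetaExp ε b * hshift

lemma thetaBracketClosed_succ_of_even_of_odd (ha : Even a) (hb : Odd b)
    (hy : x (Fin.last p) ≠ 0) :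
    thetaBracketClosed (p + 1) ε a b x
      = thetaBracketStep p ε (fun a b => thetaBracketClosed p ε a b (Fin.init x)) x a b := by
  simp only [thetaBracketStep, thetaBracketClosed_of_even_of_odd ha hb,
    thetaBracketClosed_of_even_of_even ha (hb.sub_odd odd_one),
    thetaBracketClosed_of_odd_of_odd (ha.sub_odd odd_one) hb,
    thetaBracketClosed_of_odd_of_even (ha.sub_odd odd_one) (hb.sub_odd odd_one),
    thetaDegree_of_even ε ha, thetaDegree_of_odd ε hb, thetaDegree_of_odd ε (ha.sub_odd odd_one),
    thetaDegree_of_even ε (hb.sub_odd odd_one), thetaConv_succ (hb.add_even ha) hy]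
  linear_combination
    thetaConv_add_swap (p := p) (ε := ε) (x := Fin.init x) (c := a - 1) (d := b - 1) (by grind)
    + (thetaConv p ε (a - 1) (b - 1) (Fin.init x)
      - Theta p ε (a - 1) (Fin.init x) * Theta p ε (b - 1) (Fin.init x))
      * zpow_thetaExp_mul_zpow_thetaExp (ε := ε) (ha.add_odd hb) hy
    - x (Fin.last p) ^ thetaExp ε a * x (Fin.last p) ^ thetaExp ε b
      * Theta p ε (a - 1) (Fin.init x) * Theta p ε (b - 1) (Fin.init x)
      * thetaExp_mul_of_even ε (show Even (a - 1 - b) by grind)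
    + x (Fin.last p) ^ thetaExp ε a * Theta p ε (a - 1) (Fin.init x) * Theta p ε b (Fin.init x)
      * thetaExp_mul_of_odd ε (ha.add_odd hb)

lemma thetaBracketClosed_succ (a b : ℤ) (hy : x (Fin.last p) ≠ 0) :
    thetaBracketClosed (p + 1) ε a b x
      = thetaBracketStep p ε (fun a b => thetaBracketClosed p ε a b (Fin.init x)) x a b := by
  rcases Int.even_or_odd a with ha | ha <;> rcases Int.even_or_odd b with hb | hb
  · exact thetaBracketClosed_succ_of_even_of_even ha hb
  · exact thetaBracketClosed_succ_of_even_of_odd ha hb hy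
  · exact thetaBracketClosed_succ_of_odd_of_even ha hb hy
  · exact thetaBracketClosed_succ_of_odd_of_odd ha hb

end ThetaBracketClosed

lemma thetaBracketClosed_fin_zero (ε : ℕ) (a b : ℤ) (x : Fin 0 → ℝ) :
    thetaBracketClosed 0 ε a b x = 0 := by
  unfold thetaBracketClosed
  split_ifs with h h'
  · rw [thetaConv_fin_zero (h.1.add_even h.2), neg_zero]
  · exact thetaConv_fin_zero (h'.2.add_even h'.1) x
  · rfl

theorem thetaBracket_eq_thetaBracketClosed (p ε : ℕ) (a b : ℤ) (x : Fin p → ℝ)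
    (hx : ∀ i, x i ≠ 0) : thetaBracket p ε a b x = thetaBracketClosed p ε a b x := by
  induction p generalizing a b with
  | zero => simp [thetaBracket, wedge_apply, thetaBracketClosed_fin_zero]
  | succ p ih =>
    have hinit : (fun a b => thetaBracket p ε a b (Fin.init x))
        = fun a b => thetaBracketClosed p ε a b (Fin.init x) :=
      funext₂ fun a b => ih a b (Fin.init x) fun i => hx _
    rw [thetaBracket_succ, thetaBracketClosed_succ a b (hx _), hinit]

/-- `{Θ^{1,p}_{r−1,ε}, Θ^{1,p}_{s,ε}}_f + {Θ^{1,p}_{r,ε}, Θ^{1,p}_{s−1,ε}}_f` equals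
`Θ^{1,p}_{r−1,ε} Θ^{1,p}_{s,ε} − Θ^{1,p}_{s−1,ε} Θ^{1,p}_{r,ε}` if `r, s` are both odd,
and `0` if `r, s` are both even. -/
theorem theta_bracket_shift_sum (p ε : ℕ) (r s : ℤ) (x : Fin p → ℝ) (hx : ∀ i, x i ≠ 0) :
    (Odd r → Odd s →
      pbSG p (Theta p ε (r - 1)) (Theta p ε s) x + pbSG p (Theta p ε r) (Theta p ε (s - 1)) x =
        Theta p ε (r - 1) x * Theta p ε s x - Theta p ε (s - 1) x * Theta p ε r x) ∧
    (Even r → Even s →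
      pbSG p (Theta p ε (r - 1)) (Theta p ε s) x + pbSG p (Theta p ε r) (Theta p ε (s - 1)) x
        = 0) := by
  simp only [pbSG_theta p ε _ _ hx, thetaBracket_eq_thetaBracketClosed p ε _ _ x hx]
  constructor
  · intro hr hs
    rw [thetaBracketClosed_of_even_of_odd (hr.sub_odd odd_one) hs,
      thetaBracketClosed_of_odd_of_even hr (hs.sub_odd odd_one)]
    linear_combination thetaConv_sub_thetaConv (p := p) (ε := ε) (x := x) (hr.add_odd hs)
  · intro hr hs
    rw [thetaBracketClosed_of_odd_of_even (hr.sub_odd odd_one) hs,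
      thetaBracketClosed_of_even_of_odd hr (hs.sub_odd odd_one)]
    have hshift := thetaConv_shift (p := p) (ε := ε) (x := x) (c := r - 1) (d := s) (by grind)
    rw [sub_add_cancel] at hshift
    linear_combination -hshift
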